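/- arXiv:math-ph/0410032 — 5 statements merged into one kernel-verified Lean document; each statement's English description precedes it below -/
import Mathlib

section
/- For every field t ∈ ℝ^Λ and every site i ∈ Λ, the covariances K_{ij} of the local energies U_i under the constrained Gaussian measure satisfy the Ward identity ∑_{j∈Λ} K_{ij} = 2 ⟨U_i⟩_s. -/
/-!
STATEMENT 2: Ward identity ∑_j K_{ij} = 2⟨U_i⟩_s for the constrained Gaussian
measure ∝ e^{−B(s,t)} on the hyperplane {∑_i s_i = 0} ⊂ ℝ^Λ, where
B(s,t) = ∑'⟨i,j⟩ e^{t_i+t_j}(s_i−s_j)², U_i = ∑_{j:|i−j|=1} e^{t_i+t_j}(s_i−s_j)²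
and K_{ij} = ⟨U_i U_j⟩_s − ⟨U_i⟩_s⟨U_j⟩_s.  (Lebesgue measure on the
hyperplane is formalized as an arbitrary additive Haar measure on it; the
normalized expectations do not depend on this choice.)
-/

open MeasureTheory Real
open scoped Classical

noncomputable section

namespace SZ

/-- Nearest-neighbor (graph distance 1) relation on the discrete torus `(ℤ/Lℤ)^d`. -/
def Adj {d L : ℕ} (i j : Fin d → ZMod L) : Prop :=
  i ≠ j ∧ ∃ k : Fin d, j = Function.update i k (i k + 1) ∨ j = Function.update i k (i k - 1)

/-- Sum over unordered nearest-neighbor pairs of the torus (for symmetric `g`). -/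
def nnSum {d L : ℕ} [NeZero L] (g : (Fin d → ZMod L) → (Fin d → ZMod L) → ℝ) : ℝ :=
  (1 / 2) * ∑ i : Fin d → ZMod L, ∑ j : Fin d → ZMod L, if Adj i j then g i j else 0

/-- The hyperplane `{s : ℝ^Λ | ∑_i s_i = 0}`. -/
def hyper (d L : ℕ) [NeZero L] : Submodule ℝ ((Fin d → ZMod L) → ℝ) :=
  LinearMap.ker (∑ j : Fin d → ZMod L, LinearMap.proj j)

/-- `B(s,t) = ∑'⟨i,j⟩ e^{t_i+t_j}(s_i−s_j)²`. -/
def Bform {d L : ℕ} [NeZero L] (t s : (Fin d → ZMod L) → ℝ) : ℝ :=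
  nnSum (fun i j => Real.exp (t i + t j) * (s i - s j) ^ 2)

/-- `U_i(s) = ∑_{j:|i−j|=1} e^{t_i+t_j}(s_i−s_j)²`. -/
def Uloc {d L : ℕ} [NeZero L] (t : (Fin d → ZMod L) → ℝ) (i : Fin d → ZMod L)
    (s : (Fin d → ZMod L) → ℝ) : ℝ :=
  ∑ j : Fin d → ZMod L, if Adj i j then Real.exp (t i + t j) * (s i - s j) ^ 2 else 0

/-- Expectation `⟨F⟩_s` w.r.t. the measure with density `∝ e^{−B(s,t)}` on the
hyperplane `∑ s_i = 0` (relative to a Haar = Lebesgue measure `μ` on it). -/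
def savg (d L : ℕ) [NeZero L] (μ : Measure (hyper d L))
    (t : (Fin d → ZMod L) → ℝ) (F : ((Fin d → ZMod L) → ℝ) → ℝ) : ℝ :=
  (∫ s : hyper d L, F s * Real.exp (- Bform t s) ∂μ) /
  (∫ s : hyper d L, Real.exp (- Bform t s) ∂μ)

/-- The covariance `K_{ij} = ⟨U_i U_j⟩_s − ⟨U_i⟩_s ⟨U_j⟩_s`. -/
def Kmat (d L : ℕ) [NeZero L] (μ : Measure (hyper d L))
    (t : (Fin d → ZMod L) → ℝ) (i j : Fin d → ZMod L) : ℝ :=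
  savg d L μ t (fun s => Uloc t i s * Uloc t j s)
    - savg d L μ t (Uloc t i) * savg d L μ t (Uloc t j)

end SZ

/-!
Let `N` be the dimension of the hyperplane. Since `∑_j U_j = 2B`, the left-hand side is
`2 (⟨U_i B⟩ - ⟨U_i⟩⟨B⟩)`. The forms `U_i` and `B` are homogeneous of degree 2, and `B` is
positive definite on the hyperplane because the torus is connected. For such a `B` and any `F`
homogeneous of degree `k`, the substitution `s ↦ √λ • s` gives
`∫ F e^{-λB} = λ^{-(N+k)/2} ∫ F e^{-B}`; differentiating at `λ = 1` yields
`⟨F B⟩ = (N + k)/2 ⟨F⟩`. Taking `F = U_i` and `F = 1` gives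
`⟨U_i B⟩ - ⟨U_i⟩⟨B⟩ = (N + 2)/2 ⟨U_i⟩ - N/2 ⟨U_i⟩ = ⟨U_i⟩`.
-/

section Homogeneous

open Metric

variable {E : Type*} [NormedAddCommGroup E] [NormedSpace ℝ E] {F : E → ℝ} {k : ℕ}

theorem eq_norm_pow_mul_of_homogeneous (hF : ∀ (c : ℝ) x, F (c • x) = c ^ k * F x) {x : E}
    (hx : x ≠ 0) : F x = ‖x‖ ^ k * F (‖x‖⁻¹ • x) := by
  rw [← hF, smul_inv_smul₀ (norm_ne_zero_iff.2 hx)]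

theorem apply_zero_of_homogeneous (hF : ∀ (c : ℝ) x, F (c • x) = c ^ k * F x) (hk : k ≠ 0) :
    F 0 = 0 := by
  simpa [zero_pow hk] using hF 0 0

variable [FiniteDimensional ℝ E]

theorem exists_abs_le_mul_norm_pow_of_homogeneous (hFc : Continuous F)
    (hF : ∀ (c : ℝ) x, F (c • x) = c ^ k * F x) (hk : k ≠ 0) :
    ∃ C, ∀ x, |F x| ≤ C * ‖x‖ ^ k := by
  obtain ⟨C, hC⟩ := (isCompact_sphere (0 : E) 1).exists_bound_of_continuousOn hFc.continuousOn
  refine ⟨C, fun x => ?_⟩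
  rcases eq_or_ne x 0 with rfl | hx
  · simp [apply_zero_of_homogeneous hF hk, zero_pow hk]
  · rw [eq_norm_pow_mul_of_homogeneous hF hx, abs_mul, abs_of_nonneg (by positivity), mul_comm]
    exact mul_le_mul_of_nonneg_right
      (hC _ (mem_sphere_zero_iff_norm.2 (norm_smul_inv_norm hx))) (by positivity)

theorem exists_mul_norm_pow_le_of_homogeneous (hFc : Continuous F)
    (hF : ∀ (c : ℝ) x, F (c • x) = c ^ k * F x) (hk : k ≠ 0) (hpos : ∀ x, x ≠ 0 → 0 < F x) :
    ∃ a, 0 < a ∧ ∀ x, a * ‖x‖ ^ k ≤ F x := by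
  obtain ⟨a, ha, haF⟩ : ∃ a, 0 < a ∧ ∀ u ∈ sphere (0 : E) 1, a ≤ F u := by
    rcases (sphere (0 : E) 1).eq_empty_or_nonempty with hempty | hne
    · exact ⟨1, one_pos, by simp [hempty]⟩
    obtain ⟨u₀, hu₀, hmin⟩ :=
      (isCompact_sphere (0 : E) 1).exists_isMinOn hne hFc.continuousOn
    exact ⟨F u₀, hpos u₀ (ne_zero_of_mem_unit_sphere ⟨u₀, hu₀⟩), hmin⟩
  refine ⟨a, ha, fun x => ?_⟩
  rcases eq_or_ne x 0 with rfl | hx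
  · simp [apply_zero_of_homogeneous hF hk, zero_pow hk]
  · rw [eq_norm_pow_mul_of_homogeneous hF hx, mul_comm]
    exact mul_le_mul_of_nonneg_left
      (haF _ (mem_sphere_zero_iff_norm.2 (norm_smul_inv_norm hx))) (by positivity)

end Homogeneous

section GaussianIntegrals

open Metric Module Set

variable {E : Type*} [NormedAddCommGroup E] [NormedSpace ℝ E] [FiniteDimensional ℝ E]
  [MeasurableSpace E] [BorelSpace E] (μ : Measure E) [μ.IsAddHaarMeasure]

theorem integrable_norm_pow_mul_exp_neg_mul_sq (m : ℕ) {a : ℝ} (ha : 0 < a) :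
    Integrable (fun x : E => ‖x‖ ^ m * exp (-(a * ‖x‖ ^ 2))) μ := by
  rcases subsingleton_or_nontrivial E with hE | hE
  · exact (Continuous.integrable_of_hasCompactSupport (by fun_prop)
      (HasCompactSupport.of_compactSpace _))
  refine (integrable_fun_norm_addHaar μ (f := fun y => y ^ m * exp (-(a * y ^ 2)))).2 ?_
  refine (integrableOn_rpow_mul_exp_neg_mul_sq ha (s := ((finrank ℝ E - 1 + m : ℕ) : ℝ))
    (neg_one_lt_zero.trans_le (Nat.cast_nonneg _))).congr_fun (fun y _ => ?_) measurableSet_Ioi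
  simp only [smul_eq_mul, Real.rpow_natCast, pow_add, neg_mul]
  ring

theorem integrable_mul_exp_neg_of_homogeneous {G Q : E → ℝ} (hGc : Continuous G)
    (hQc : Continuous Q) (hQ : ∀ (c : ℝ) x, Q (c • x) = c ^ 2 * Q x)
    (hQpos : ∀ x, x ≠ 0 → 0 < Q x) {C : ℝ} {m : ℕ} (hGb : ∀ x, |G x| ≤ C * ‖x‖ ^ m) :
    Integrable (fun x => G x * exp (-Q x)) μ := by
  obtain ⟨a, ha, haQ⟩ := exists_mul_norm_pow_le_of_homogeneous hQc hQ two_ne_zero hQpos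
  refine ((integrable_norm_pow_mul_exp_neg_mul_sq μ m ha).const_mul C).mono'
    (by fun_prop) (Filter.Eventually.of_forall fun x => ?_)
  rw [norm_mul, Real.norm_eq_abs, Real.norm_of_nonneg (exp_pos _).le, ← mul_assoc]
  exact mul_le_mul (hGb x) (exp_le_exp.2 (by linarith [haQ x])) (exp_pos _).le
    ((abs_nonneg _).trans (hGb x))

theorem integral_mul_exp_neg_mul_of_homogeneous {F Q : E → ℝ} {k : ℕ}
    (hF : ∀ (c : ℝ) x, F (c • x) = c ^ k * F x) (hQ : ∀ (c : ℝ) x, Q (c • x) = c ^ 2 * Q x)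
    {s : ℝ} (hs : 0 < s) :
    ∫ x, F x * exp (-(s * Q x)) ∂μ
      = s ^ (-((finrank ℝ E + k : ℕ) : ℝ) / 2) * ∫ x, F x * exp (-Q x) ∂μ := by
  have hscale := Measure.integral_comp_smul_of_nonneg μ (fun x => F x * exp (-Q x)) (√s)
    (hR := sqrt_nonneg s)
  simp only [hF, hQ, sq_sqrt hs.le, mul_assoc, integral_const_mul, smul_eq_mul] at hscale
  have hroot : (√s ^ (finrank ℝ E + k))⁻¹ = s ^ (-((finrank ℝ E + k : ℕ) : ℝ) / 2) := by
    rw [sqrt_eq_rpow, ← rpow_natCast, ← rpow_mul hs.le, ← rpow_neg hs.le]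
    ring_nf
  rw [← hroot, pow_add, mul_inv, mul_comm _ (√s ^ k)⁻¹, mul_assoc, ← hscale,
    inv_mul_cancel_left₀ (pow_ne_zero _ (sqrt_pos.2 hs).ne')]

theorem hasDerivAt_integral_mul_exp_neg_mul {F Q : E → ℝ} {k : ℕ} (hFc : Continuous F)
    (hQc : Continuous Q) (hQ : ∀ (c : ℝ) x, Q (c • x) = c ^ 2 * Q x)
    (hQpos : ∀ x, x ≠ 0 → 0 < Q x) {C : ℝ} (hFb : ∀ x, |F x| ≤ C * ‖x‖ ^ k) :
    HasDerivAt (fun s => ∫ x, F x * exp (-(s * Q x)) ∂μ)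
      (-∫ x, F x * Q x * exp (-Q x) ∂μ) 1 := by
  have hQnonneg : ∀ x, 0 ≤ Q x := fun x => by
    rcases eq_or_ne x 0 with rfl | hx
    · exact (apply_zero_of_homogeneous hQ two_ne_zero).ge
    · exact (hQpos x hx).le
  obtain ⟨B, hB⟩ := exists_abs_le_mul_norm_pow_of_homogeneous hQc hQ two_ne_zero
  have hbound_int : Integrable (fun x => |F x * Q x| * exp (-(Q x / 2))) μ := by
    refine integrable_mul_exp_neg_of_homogeneous μ (by fun_prop) (by fun_prop)
      (fun c x => by rw [hQ]; ring) (fun x hx => half_pos (hQpos x hx)) (m := k + 2)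
      (C := C * B) (fun x => ?_)
    rw [abs_abs, abs_mul, pow_add, mul_mul_mul_comm]
    exact mul_le_mul (hFb x) (hB x) (abs_nonneg _) ((abs_nonneg _).trans (hFb x))
  rw [← integral_neg]
  refine (hasDerivAt_integral_of_dominated_loc_of_deriv_le
    (F := fun (s : ℝ) x => F x * exp (-(s * Q x)))
    (F' := fun s x => -(F x * Q x * exp (-(s * Q x)))) (ball_mem_nhds 1 one_half_pos)
    (Filter.Eventually.of_forall fun s => (by fun_prop : Continuous _).aestronglyMeasurable)
    (by simpa using integrable_mul_exp_neg_of_homogeneous μ hFc hQc hQ hQpos hFb)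
    (by fun_prop : Continuous _).aestronglyMeasurable
    (Filter.Eventually.of_forall fun x s hs => ?_) hbound_int
    (Filter.Eventually.of_forall fun x s _ => ?_)).2.congr_deriv (by simp)
  · have hs' : 1 / 2 < s := by
      linarith [(abs_lt.1 (Real.dist_eq s 1 ▸ mem_ball.1 hs)).1]
    rw [norm_neg, norm_mul, Real.norm_eq_abs, Real.norm_of_nonneg (exp_pos _).le]
    gcongr
    nlinarith [hQnonneg x]
  · exact ((hasDerivAt_mul_const (Q x)).neg.exp.const_mul (F x)).congr_deriv
      (by simp only [Pi.neg_apply]; ring)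

theorem integral_mul_mul_exp_neg_of_homogeneous {F Q : E → ℝ} {k : ℕ} (hFc : Continuous F)
    (hQc : Continuous Q) (hF : ∀ (c : ℝ) x, F (c • x) = c ^ k * F x)
    (hQ : ∀ (c : ℝ) x, Q (c • x) = c ^ 2 * Q x) (hQpos : ∀ x, x ≠ 0 → 0 < Q x) {C : ℝ}
    (hFb : ∀ x, |F x| ≤ C * ‖x‖ ^ k) :
    ∫ x, F x * Q x * exp (-Q x) ∂μ
      = (finrank ℝ E + k : ℕ) / 2 * ∫ x, F x * exp (-Q x) ∂μ := by
  set n : ℝ := ((finrank ℝ E + k : ℕ) : ℝ)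
  have hscaled : HasDerivAt (fun s => ∫ x, F x * exp (-(s * Q x)) ∂μ)
      (-n / 2 * ∫ x, F x * exp (-Q x) ∂μ) 1 := by
    refine (((hasDerivAt_rpow_const (p := -n / 2) (Or.inl one_ne_zero)).mul_const
      (∫ x, F x * exp (-Q x) ∂μ)).congr_of_eventuallyEq ?_).congr_deriv (by simp)
    filter_upwards [Ioi_mem_nhds one_pos] with s hs
    exact integral_mul_exp_neg_mul_of_homogeneous μ hF hQ hs
  have := (hasDerivAt_integral_mul_exp_neg_mul μ hFc hQc hQ hQpos hFb).unique hscaled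
  linarith

end GaussianIntegrals

namespace SZ

variable {d L : ℕ} [NeZero L]

theorem apply_eq_of_forall_adj {s : (Fin d → ZMod L) → ℝ} (h : ∀ p q, Adj p q → s p = s q)
    (p q : Fin d → ZMod L) : s p = s q := by
  let periods : AddSubmonoid (Fin d → ZMod L) :=
    { carrier := {v | ∀ p, s (p + v) = s p}
      zero_mem' := fun p => by rw [add_zero]
      add_mem' := fun hv hw p => by rw [← add_assoc, hw, hv] }
  have hsingle : ∀ k, Pi.single k 1 ∈ periods := fun k p => by
    by_cases hp : p + Pi.single k 1 = p
    · rw [hp]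
    refine (h _ _ ⟨Ne.symm hp, k, Or.inl ?_⟩).symm
    ext m
    rcases eq_or_ne m k with rfl | hm <;> simp [*]
  have hall : ∀ v, v ∈ periods := fun v => by
    rw [← Finset.univ_sum_single v]
    refine sum_mem fun k _ => ?_
    rw [← ZMod.natCast_zmod_val (v k), ← nsmul_one, Pi.single_nsmul]
    exact nsmul_mem (hsingle k) _
  simpa using (hall (q - p) p).symm

theorem mem_hyper_iff {s : (Fin d → ZMod L) → ℝ} : s ∈ hyper d L ↔ ∑ j, s j = 0 := by
  simp [hyper, LinearMap.sum_apply]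

theorem eq_zero_of_mem_hyper_of_forall_adj {s : (Fin d → ZMod L) → ℝ} (hs : s ∈ hyper d L)
    (h : ∀ p q, Adj p q → s p = s q) : s = 0 := by
  have hsum := mem_hyper_iff.1 hs
  simp only [fun j => apply_eq_of_forall_adj h j 0, Finset.sum_const, Finset.card_univ,
    nsmul_eq_mul, mul_eq_zero, Nat.cast_eq_zero, Fintype.card_ne_zero, false_or] at hsum
  exact funext fun j => (apply_eq_of_forall_adj h j 0).trans hsum

theorem Bform_eq_half_sum_Uloc (t s : (Fin d → ZMod L) → ℝ) :
    Bform t s = 1 / 2 * ∑ i, Uloc t i s := rfl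

theorem sum_Uloc (t s : (Fin d → ZMod L) → ℝ) : ∑ i, Uloc t i s = 2 * Bform t s := by
  rw [Bform_eq_half_sum_Uloc]; ring

theorem Uloc_nonneg (t : (Fin d → ZMod L) → ℝ) (i : Fin d → ZMod L) (s : (Fin d → ZMod L) → ℝ) :
    0 ≤ Uloc t i s :=
  Finset.sum_nonneg fun j _ => by split_ifs <;> positivity

theorem apply_eq_of_Uloc_eq_zero {t s : (Fin d → ZMod L) → ℝ} {p q : Fin d → ZMod L}
    (h : Uloc t p s = 0) (hpq : Adj p q) : s p = s q := by
  have hterm := (Finset.sum_eq_zero_iff_of_nonneg (fun j _ => by split_ifs <;> positivity)).1 h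
    q (Finset.mem_univ q)
  rw [if_pos hpq, mul_eq_zero, pow_eq_zero_iff two_ne_zero, sub_eq_zero] at hterm
  exact hterm.resolve_left (exp_pos _).ne'

theorem Bform_pos (t : (Fin d → ZMod L) → ℝ) {s : hyper d L} (hs0 : s ≠ 0) :
    0 < Bform t s := by
  rw [Bform_eq_half_sum_Uloc]
  refine mul_pos one_half_pos ((Finset.sum_nonneg fun i _ => Uloc_nonneg t i s).lt_of_ne ?_)
  intro hzero
  have hU := (Finset.sum_eq_zero_iff_of_nonneg fun i _ => Uloc_nonneg t i s).1 hzero.symm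
  exact hs0 (Subtype.ext (eq_zero_of_mem_hyper_of_forall_adj s.2 fun p q =>
    apply_eq_of_Uloc_eq_zero (hU p (Finset.mem_univ p))))

theorem Uloc_smul (t : (Fin d → ZMod L) → ℝ) (i : Fin d → ZMod L) (c : ℝ)
    (s : (Fin d → ZMod L) → ℝ) : Uloc t i (c • s) = c ^ 2 * Uloc t i s := by
  simp only [Uloc, Pi.smul_apply, smul_eq_mul, Finset.mul_sum]
  refine Finset.sum_congr rfl fun j _ => ?_
  split_ifs <;> ring

theorem Bform_smul (t : (Fin d → ZMod L) → ℝ) (c : ℝ) (s : (Fin d → ZMod L) → ℝ) :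
    Bform t (c • s) = c ^ 2 * Bform t s := by
  simp only [Bform_eq_half_sum_Uloc, Uloc_smul, ← Finset.mul_sum]
  ring

theorem continuous_Uloc (t : (Fin d → ZMod L) → ℝ) (i : Fin d → ZMod L) :
    Continuous fun s : hyper d L => Uloc t i s :=
  (continuous_finsetSum _ fun j _ => by split_ifs <;> fun_prop : Continuous (Uloc t i)).comp
    continuous_subtype_val

theorem continuous_Bform (t : (Fin d → ZMod L) → ℝ) :
    Continuous fun s : hyper d L => Bform t s :=
  continuous_const.mul (continuous_finsetSum _ fun i _ => continuous_Uloc t i)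

section Integrals

variable (μ : Measure (hyper d L)) [μ.IsAddHaarMeasure] (t : (Fin d → ZMod L) → ℝ)

theorem integrable_mul_exp_neg_Bform {G : hyper d L → ℝ} {m : ℕ} (hGc : Continuous G)
    (hG : ∀ (c : ℝ) s, G (c • s) = c ^ m * G s) (hm : m ≠ 0) :
    Integrable (fun s => G s * exp (-Bform t s)) μ := by
  obtain ⟨C, hC⟩ := exists_abs_le_mul_norm_pow_of_homogeneous hGc hG hm
  exact integrable_mul_exp_neg_of_homogeneous μ hGc (continuous_Bform t)
    (fun c s => Bform_smul t c s) (fun _ => Bform_pos t) hC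

theorem integral_exp_neg_Bform_pos : 0 < ∫ s : hyper d L, exp (-Bform t s) ∂μ :=
  integral_exp_pos <| by
    simpa using integrable_mul_exp_neg_of_homogeneous μ (G := 1) continuous_const
      (continuous_Bform t) (fun c s => Bform_smul t c s) (fun _ => Bform_pos t) (C := 1) (m := 0)
      (by simp)

theorem integral_Uloc_mul_Bform_mul_exp_neg (i : Fin d → ZMod L) :
    ∫ s : hyper d L, Uloc t i s * Bform t s * exp (-Bform t s) ∂μ
      = (Module.finrank ℝ (hyper d L) + 2 : ℕ) / 2
        * ∫ s : hyper d L, Uloc t i s * exp (-Bform t s) ∂μ := by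
  obtain ⟨C, hC⟩ :=
    exists_abs_le_mul_norm_pow_of_homogeneous (continuous_Uloc t i) (fun c s => Uloc_smul t i c s)
      two_ne_zero
  exact integral_mul_mul_exp_neg_of_homogeneous μ (continuous_Uloc t i) (continuous_Bform t)
    (fun c s => Uloc_smul t i c s) (fun c s => Bform_smul t c s) (fun _ => Bform_pos t) hC

theorem integral_Bform_mul_exp_neg :
    ∫ s : hyper d L, Bform t s * exp (-Bform t s) ∂μ
      = Module.finrank ℝ (hyper d L) / 2 * ∫ s : hyper d L, exp (-Bform t s) ∂μ := by
  simpa using integral_mul_mul_exp_neg_of_homogeneous μ (F := 1) (k := 0) continuous_const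
    (continuous_Bform t) (by simp) (fun c s => Bform_smul t c s) (fun _ => Bform_pos t) (C := 1)
    (by simp)

theorem sum_integral_Uloc_mul_Uloc_mul_exp_neg (i : Fin d → ZMod L) :
    ∑ j, ∫ s : hyper d L, Uloc t i s * Uloc t j s * exp (-Bform t s) ∂μ
      = 2 * ∫ s : hyper d L, Uloc t i s * Bform t s * exp (-Bform t s) ∂μ := by
  rw [← integral_finsetSum _ fun j _ => integrable_mul_exp_neg_Bform μ t
    (G := fun s => Uloc t i s * Uloc t j s) ((continuous_Uloc t i).mul (continuous_Uloc t j))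
    (fun c s => by simp only [SetLike.val_smul, Uloc_smul]; ring) four_ne_zero,
    ← integral_const_mul]
  refine integral_congr_ae (Filter.Eventually.of_forall fun s => ?_)
  simp only [← Finset.sum_mul, ← Finset.mul_sum, sum_Uloc]
  ring

theorem sum_integral_Uloc_mul_exp_neg :
    ∑ j, ∫ s : hyper d L, Uloc t j s * exp (-Bform t s) ∂μ
      = 2 * ∫ s : hyper d L, Bform t s * exp (-Bform t s) ∂μ := by
  rw [← integral_finsetSum _ fun j _ => integrable_mul_exp_neg_Bform μ t (continuous_Uloc t j)
    (fun c s => Uloc_smul t j c s) two_ne_zero, ← integral_const_mul]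
  refine integral_congr_ae (Filter.Eventually.of_forall fun s => ?_)
  simp only [← Finset.sum_mul, sum_Uloc]
  ring

end Integrals

theorem K_ward_identity_general (d L : ℕ) [NeZero L]
    (μ : Measure (hyper d L)) [μ.IsAddHaarMeasure]
    (t : (Fin d → ZMod L) → ℝ) (i : Fin d → ZMod L) :
    ∑ j : Fin d → ZMod L, Kmat d L μ t i j = 2 * savg d L μ t (Uloc t i) := by
  have hZ := integral_exp_neg_Bform_pos μ t
  simp only [Kmat, savg]
  rw [Finset.sum_sub_distrib, ← Finset.sum_div, sum_integral_Uloc_mul_Uloc_mul_exp_neg,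
    integral_Uloc_mul_Bform_mul_exp_neg, ← Finset.mul_sum, ← Finset.sum_div,
    sum_integral_Uloc_mul_exp_neg, integral_Bform_mul_exp_neg]
  field_simp
  push_cast
  ring

/-- Ward identity: `∑_j K_{ij} = 2 ⟨U_i⟩_s`. -/
theorem K_ward_identity (d L : ℕ) [NeZero L] (hd : 1 ≤ d) (hL : 2 ≤ L)
    (μ : Measure (hyper d L)) [μ.IsAddHaarMeasure]
    (t : (Fin d → ZMod L) → ℝ) (i : Fin d → ZMod L) :
    ∑ j : Fin d → ZMod L, Kmat d L μ t i j = 2 * savg d L μ t (Uloc t i) :=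
  K_ward_identity_general d L μ t i

end SZ
end
end

section
/- Let c > 0 and let Q be a positive semidefinite quadratic form on ℝ^{1+m} (in variables (u, v) with u ∈ ℝ, v ∈ ℝ^m) such that ∫_{ℝ^{1+m}} e^{−cu² − Q(u,v)} du dv < ∞. Then ∫ c u² e^{−cu² − Q(u,v)} du dv ≤ ½ ∫ e^{−cu² − Q(u,v)} du dv; that is, the expectation of cu² under the probability measure proportional to e^{−cu² − Q(u,v)} is at most 1/2. -/
/-!
Write `P(x) = c u² + Q(x)` for the full exponent, a positive semidefinite quadratic form. Since
`e^{-P}` is integrable, `P` is positive definite (along a null direction `e^{-P}` would be periodic),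
hence coercive, so all second moments of the Gaussian weight `e^{-P}` exist. Gaussian integration
by parts (Stein's identity) gives `∫ u · polar P(x, y) e^{-P} = u(y) ∫ e^{-P}` for every `y`.
Taking for `y` the vector `Y = ∫ u x e^{-P}` yields `2 P(Y) = K ∫ e^{-P}` with
`K = ∫ u² e^{-P} = u(Y)`, and `P(Y) ≥ c u(Y)² = c K²` gives `c K ≤ ½ ∫ e^{-P}`.
-/

open MeasureTheory Filter Topology Real

section Periodic

variable {E : Type*} [NormedAddCommGroup E] [NormedSpace ℝ E] [MeasurableSpace E] [BorelSpace E]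
  {μ : Measure E} [μ.IsAddRightInvariant] [μ.IsOpenPosMeasure]

theorem Function.Periodic.not_integrable {f : E → ℝ} {v : E} (hf : Function.Periodic f v)
    (hv : v ≠ 0) (hpos : ∀ x, 0 < f x) : ¬ Integrable f μ := by
  intro hint
  set B : ℕ → Set E := fun n => Metric.ball (n • v) 1
  -- the mass of `f` on the balls `B n` is constant, yet tends to `0` as they escape to infinity
  have hmass (n : ℕ) : ∫ x, (B n).indicator f x ∂μ = ∫ x in B 0, f x ∂μ := by
    rw [← integral_indicator measurableSet_ball, ← integral_add_right_eq_self _ (n • v)]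
    congr 1 with x
    simp [Set.indicator, B, dist_eq_norm, (hf.nsmul n) x]
  have hlim : Tendsto (fun n => ∫ x, (B n).indicator f x ∂μ) atTop (𝓝 0) := by
    rw [← integral_zero E ℝ]
    refine tendsto_integral_of_dominated_convergence (fun x => ‖f x‖)
      (fun n => hint.1.indicator measurableSet_ball) hint.norm
      (fun n => Eventually.of_forall fun x => norm_indicator_le_norm_self _ _)
      (Eventually.of_forall fun x => tendsto_const_nhds.congr' ?_)
    obtain ⟨N, hN⟩ := exists_nat_gt ((‖x‖ + 1) / ‖v‖)
    rw [div_lt_iff₀ (norm_pos_iff.mpr hv)] at hN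
    filter_upwards [eventually_ge_atTop N] with n hn
    have hfar : 1 ≤ dist x (n • v) := by
      have hNn : (N : ℝ) * ‖v‖ ≤ n * ‖v‖ := by gcongr
      have hnv : ‖n • v‖ = n * ‖v‖ := by rw [RCLike.norm_nsmul ℝ, nsmul_eq_mul]
      rw [dist_comm, dist_eq_norm]
      linarith [norm_sub_norm_le (n • v) x]
    simp [B, Set.indicator_of_notMem, Metric.mem_ball, hfar.not_gt]
  have hmass_pos : 0 < ∫ x in B 0, f x ∂μ := by
    rw [setIntegral_pos_iff_support_of_nonneg_ae (Eventually.of_forall fun x => (hpos x).le)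
      hint.integrableOn]
    simpa [B, Function.support, fun x => (hpos x).ne'] using
      Metric.measure_ball_pos μ (0 : E) one_pos
  simp only [hmass] at hlim
  exact hmass_pos.ne' (tendsto_nhds_unique tendsto_const_nhds hlim)

end Periodic

namespace QuadraticMap

section Module

variable {E : Type*} [AddCommGroup E] [Module ℝ E] {P : QuadraticForm ℝ E}

theorem polar_eq_zero_of_nonneg_of_eq_zero (hP : ∀ x, 0 ≤ P x) {x : E} (hx : P x = 0) (y : E) :
    polar P x y = 0 := by
  have hB (z : E) : 0 ≤ P.polarBilin z z := by
    simpa [polar_self] using mul_nonneg zero_le_two (hP z)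
  have hsymm : P.polarBilin.IsSymm := ⟨fun z w => by simp [polar_comm]⟩
  have hker := (LinearMap.BilinForm.apply_apply_same_eq_zero_iff P.polarBilin hB hsymm
    (x := x)).mp (by simp [polar_self, hx])
  simpa using LinearMap.congr_fun hker y

theorem periodic_of_nonneg_of_eq_zero (hP : ∀ x, 0 ≤ P x) {v : E} (hv : P v = 0) :
    Function.Periodic P v := fun x => by
  rw [QuadraticMap.map_add P, hv, polar_comm, polar_eq_zero_of_nonneg_of_eq_zero hP hv,
    add_zero, add_zero]

theorem hasLineDerivAt_exp_neg (P : QuadraticForm ℝ E) (x v : E) :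
    HasLineDerivAt ℝ (fun x => exp (-P x)) (-polar P x v * exp (-P x)) x v := by
  have h : HasDerivAt (fun t : ℝ => exp (-P (x + t • v)))
      (exp (-P (x + (0 : ℝ) • v)) * -polar P x v) 0 :=
    (P.hasLineDerivAt x v).neg.exp
  rwa [zero_smul, add_zero, mul_comm] at h

end Module

variable {E : Type*} [NormedAddCommGroup E] [NormedSpace ℝ E] {P : QuadraticForm ℝ E}

theorem posDef_of_integrable_exp_neg [MeasurableSpace E] [BorelSpace E] {μ : Measure E}
    [μ.IsAddRightInvariant] [μ.IsOpenPosMeasure] (hP : ∀ x, 0 ≤ P x)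
    (hint : Integrable (fun x => exp (-P x)) μ) : P.PosDef :=
  posDef_of_nonneg hP fun v hv => by
    by_contra hne
    exact ((periodic_of_nonneg_of_eq_zero hP hv).comp fun t => exp (-t)).not_integrable hne
      (fun x => exp_pos _) hint

variable [FiniteDimensional ℝ E]

theorem continuous_of_finiteDimensional (P : QuadraticForm ℝ E) : Continuous P := by
  have hB := P.polarBilin.toContinuousBilinearMap.continuous.clm_apply continuous_id
  refine (hB.div_const 2).congr fun x => ?_
  simp [polar_self]

theorem PosDef.exists_pos_mul_norm_sq_le (hP : P.PosDef) : ∃ δ > 0, ∀ x, δ * ‖x‖ ^ 2 ≤ P x := by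
  rcases subsingleton_or_nontrivial E with hE | hE
  · exact ⟨1, one_pos, fun x => by simp [Subsingleton.elim x 0]⟩
  obtain ⟨z, hz, hmin⟩ := (isCompact_sphere (0 : E) 1).exists_isMinOn
    (NormedSpace.sphere_nonempty.mpr zero_le_one) P.continuous_of_finiteDimensional.continuousOn
  have hz1 : ‖z‖ = 1 := mem_sphere_zero_iff_norm.mp hz
  refine ⟨P z, hP z (norm_ne_zero_iff.mp (by simp [hz1])), fun x => ?_⟩
  rcases eq_or_ne x 0 with rfl | hx
  · simp
  have hx' : ‖x‖ ≠ 0 := norm_ne_zero_iff.mpr hx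
  have h : P z ≤ P (‖x‖⁻¹ • x) := hmin (by simp [norm_smul, hx'])
  rw [QuadraticMap.map_smul, smul_eq_mul] at h
  calc P z * ‖x‖ ^ 2 ≤ ‖x‖⁻¹ * ‖x‖⁻¹ * P x * ‖x‖ ^ 2 := by gcongr
    _ = P x := by field_simp

end QuadraticMap

section GaussianWeight

variable {E : Type*} [NormedAddCommGroup E] [NormedSpace ℝ E] [FiniteDimensional ℝ E]
  [MeasurableSpace E] [BorelSpace E] {μ : Measure E} [μ.IsAddHaarMeasure]
  {P : QuadraticForm ℝ E}

theorem integrable_exp_neg_mul (hint : Integrable (fun x => exp (-P x)) μ) {s : ℝ} (hs : 0 < s) :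
    Integrable (fun x => exp (-(s * P x))) μ := by
  refine (hint.comp_smul (sqrt_ne_zero'.mpr hs)).congr (Eventually.of_forall fun x => ?_)
  simp [QuadraticMap.map_smul, mul_self_sqrt hs.le]

theorem integrable_norm_sq_mul_exp_neg (hP : ∀ x, 0 ≤ P x)
    (hint : Integrable (fun x => exp (-P x)) μ) :
    Integrable (fun x => ‖x‖ ^ 2 * exp (-P x)) μ := by
  obtain ⟨δ, hδ, hcoer⟩ :=
    (QuadraticMap.posDef_of_integrable_exp_neg hP hint).exists_pos_mul_norm_sq_le
  refine ((integrable_exp_neg_mul hint one_half_pos).const_mul (2 / δ)).mono'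
    (((continuous_norm.pow 2).mul
      (P.continuous_of_finiteDimensional.neg.rexp)).aestronglyMeasurable)
    (Eventually.of_forall fun x => ?_)
  -- `t ≤ 2 exp (t / 2)` trades the polynomial weight for half of the Gaussian decay
  have hdecay : P x * exp (-P x) ≤ 2 * exp (-(1 / 2 * P x)) :=
    calc P x * exp (-P x) ≤ 2 * exp (1 / 2 * P x) * exp (-P x) := by
          gcongr; linarith [add_one_le_exp (1 / 2 * P x)]
      _ = 2 * exp (-(1 / 2 * P x)) := by rw [mul_assoc, ← exp_add]; ring_nf
  rw [norm_of_nonneg (by positivity)]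
  calc ‖x‖ ^ 2 * exp (-P x) ≤ P x / δ * exp (-P x) := by
        gcongr; rw [le_div_iff₀ hδ]; linarith [hcoer x]
    _ ≤ 2 / δ * exp (-(1 / 2 * P x)) := by
        rw [div_mul_eq_mul_div, div_mul_eq_mul_div]; gcongr

theorem integrable_exp_neg_smul_of_norm_le {F : Type*} [NormedAddCommGroup F] [NormedSpace ℝ F]
    (hP : ∀ x, 0 ≤ P x) (hint : Integrable (fun x => exp (-P x)) μ) {g : E → F}
    (hg : AEStronglyMeasurable g μ) {C : ℝ} (hC : ∀ x, ‖g x‖ ≤ C * (1 + ‖x‖ ^ 2)) :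
    Integrable (fun x => exp (-P x) • g x) μ := by
  refine ((hint.add (integrable_norm_sq_mul_exp_neg hP hint)).const_mul C).mono'
    ((P.continuous_of_finiteDimensional.neg.rexp.aestronglyMeasurable).smul hg)
    (Eventually.of_forall fun x => ?_)
  rw [norm_smul, norm_of_nonneg (exp_pos _).le]
  calc exp (-P x) * ‖g x‖ ≤ exp (-P x) * (C * (1 + ‖x‖ ^ 2)) := by gcongr; exact hC x
    _ = C * (exp (-P x) + ‖x‖ ^ 2 * exp (-P x)) := by ring

theorem integral_mul_polar_mul_exp_neg (hP : ∀ x, 0 ≤ P x)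
    (hint : Integrable (fun x => exp (-P x)) μ) (ℓ : E →L[ℝ] ℝ) (y : E) :
    ∫ x, ℓ x * QuadraticMap.polar P x y * exp (-P x) ∂μ = ℓ y * ∫ x, exp (-P x) ∂μ := by
  set B := P.polarBilin.toContinuousBilinearMap
  have hB (x : E) : QuadraticMap.polar P x y = B x y := rfl
  have hnorm (x : E) : ‖x‖ ≤ 1 + ‖x‖ ^ 2 := by nlinarith [sq_nonneg (‖x‖ - 1)]
  have hfg : Integrable (fun x => ℓ x * exp (-P x)) μ := by
    refine (integrable_exp_neg_smul_of_norm_le hP hint ℓ.continuous.aestronglyMeasurable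
      (C := ‖ℓ‖) fun x => ?_).congr (Eventually.of_forall fun x => by simp [mul_comm])
    exact (ℓ.le_opNorm x).trans (by gcongr; exact hnorm x)
  have hfg' : Integrable (fun x => ℓ x * (-QuadraticMap.polar P x y * exp (-P x))) μ := by
    refine (integrable_exp_neg_smul_of_norm_le hP hint
      (g := fun x => -(ℓ x * QuadraticMap.polar P x y))
      (ℓ.continuous.mul (B.continuous.clm_apply continuous_const)).neg.aestronglyMeasurable
      (C := ‖ℓ‖ * (‖B‖ * ‖y‖)) fun x => ?_).congr
      (Eventually.of_forall fun x => by simp only [smul_eq_mul]; ring)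
    rw [norm_neg, norm_mul, hB]
    calc ‖ℓ x‖ * ‖B x y‖ ≤ (‖ℓ‖ * ‖x‖) * (‖B‖ * ‖x‖ * ‖y‖) := by
          gcongr; exacts [ℓ.le_opNorm x, B.le_opNorm₂ x y]
      _ ≤ ‖ℓ‖ * (‖B‖ * ‖y‖) * (1 + ‖x‖ ^ 2) := by
          nlinarith [norm_nonneg ℓ, norm_nonneg B, norm_nonneg y,
            mul_nonneg (mul_nonneg (norm_nonneg ℓ) (norm_nonneg B)) (norm_nonneg y)]
  have hibp := integral_bilinear_hasLineDerivAt_right_eq_neg_left_of_integrable (μ := μ)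
    (B := ContinuousLinearMap.mul ℝ ℝ) (hint.const_mul (ℓ y)) hfg' hfg
    (fun x _ => ℓ.hasFDerivAt.hasLineDerivAt y)
    (fun x _ => QuadraticMap.hasLineDerivAt_exp_neg P x y)
  simp only [ContinuousLinearMap.mul_apply', neg_mul, mul_neg, integral_neg,
    integral_const_mul, neg_inj] at hibp
  simpa only [mul_assoc] using hibp

theorem mul_integral_sq_mul_exp_neg_le (hP : ∀ x, 0 ≤ P x)
    (hint : Integrable (fun x => exp (-P x)) μ) (ℓ : E →L[ℝ] ℝ) {c : ℝ}
    (hc : ∀ x, c * ℓ x ^ 2 ≤ P x) :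
    c * ∫ x, ℓ x ^ 2 * exp (-P x) ∂μ ≤ 1 / 2 * ∫ x, exp (-P x) ∂μ := by
  have hY : Integrable (fun x => exp (-P x) • ℓ x • x) μ :=
    integrable_exp_neg_smul_of_norm_le hP hint
      (ℓ.continuous.smul continuous_id).aestronglyMeasurable (C := ‖ℓ‖) fun x => by
        rw [norm_smul]
        calc ‖ℓ x‖ * ‖x‖ ≤ ‖ℓ‖ * ‖x‖ * ‖x‖ := by gcongr; exact ℓ.le_opNorm x
          _ ≤ ‖ℓ‖ * (1 + ‖x‖ ^ 2) := by nlinarith [norm_nonneg ℓ]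
  set Y := ∫ x, exp (-P x) • ℓ x • x ∂μ
  set B := P.polarBilin.toContinuousBilinearMap
  set K := ∫ x, ℓ x ^ 2 * exp (-P x) ∂μ
  set I := ∫ x, exp (-P x) ∂μ
  have hK : ℓ Y = K := by
    rw [← ℓ.integral_comp_comm hY]
    congr 1 with x
    simp only [map_smul, smul_eq_mul]; ring
  have hPY : 2 * P Y = K * I := by
    have hpolar : QuadraticMap.polar P Y Y =
        ∫ x, ℓ x * QuadraticMap.polar P x Y * exp (-P x) ∂μ := by
      rw [QuadraticMap.polar_comm, show QuadraticMap.polar P Y Y = B.flip Y Y from rfl,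
        ← (B.flip Y).integral_comp_comm hY]
      congr 1 with x
      simp only [map_smul, smul_eq_mul, B, ContinuousLinearMap.flip_apply,
        LinearMap.toContinuousBilinearMap_apply, QuadraticMap.polarBilin_apply_apply]
      ring
    rw [← hK, ← integral_mul_polar_mul_exp_neg hP hint, ← hpolar, QuadraticMap.polar_self,
      two_smul, two_mul]
  have hK0 : 0 ≤ K := integral_nonneg fun x => by positivity
  have hI0 : 0 ≤ I := integral_nonneg fun x => by positivity
  have hcY := hc Y
  rw [hK] at hcY
  rcases hK0.eq_or_lt with hK_zero | hK_pos
  · rw [← hK_zero]; linarith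
  · nlinarith

end GaussianWeight

instance {E F : Type*} [MeasureSpace E] [MeasureSpace F] [AddGroup E] [AddGroup F]
    [TopologicalSpace E] [TopologicalSpace F] [MeasurableAdd E] [MeasurableAdd F]
    [(volume : Measure E).IsAddHaarMeasure] [(volume : Measure F).IsAddHaarMeasure]
    [SFinite (volume : Measure E)] [SFinite (volume : Measure F)] :
    (volume : Measure (E × F)).IsAddHaarMeasure :=
  Measure.prod.instIsAddHaarMeasure _ _

theorem gaussian_quadratic_expectation_le_half
    (m : ℕ) (c : ℝ) (hc : 0 < c)
    (Q : QuadraticForm ℝ (ℝ × (Fin m → ℝ))) (hQ : ∀ x, 0 ≤ Q x)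
    (hint : Integrable (fun x : ℝ × (Fin m → ℝ) => Real.exp (- (c * x.1 ^ 2) - Q x))) :
    ∫ x : ℝ × (Fin m → ℝ), c * x.1 ^ 2 * Real.exp (- (c * x.1 ^ 2) - Q x)
      ≤ (1 / 2) * ∫ x : ℝ × (Fin m → ℝ), Real.exp (- (c * x.1 ^ 2) - Q x) := by
  set P : QuadraticForm ℝ (ℝ × (Fin m → ℝ)) :=
    c • QuadraticMap.sq.comp (LinearMap.fst ℝ ℝ (Fin m → ℝ)) + Q
  have hPx (x : ℝ × (Fin m → ℝ)) : P x = c * x.1 ^ 2 + Q x := by simp [P, sq]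
  have hexp (x : ℝ × (Fin m → ℝ)) : -(c * x.1 ^ 2) - Q x = -P x := by rw [hPx]; ring
  simp only [hexp, mul_assoc, integral_const_mul] at hint ⊢
  refine mul_integral_sq_mul_exp_neg_le (fun x => ?_) hint (ContinuousLinearMap.fst ℝ ℝ _)
    fun x => ?_
  · rw [hPx]; exact add_nonneg (by positivity) (hQ x)
  · rw [hPx]; exact le_add_of_nonneg_right (hQ x)
end

section
/- Let T be an integrable real random variable with mean m = E[T], let G > 0, and suppose E[e^{T}] ≤ e^{m + G/2} and E[e^{−T}] ≤ e^{−m + G/2}. If 0 ≤ E[sinh T] ≤ 1, then −G/4 ≤ m ≤ 1 + G/4. -/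
/-!
By Jensen, `e^{±m} ≤ E[e^{±T}]`, and `E[e^T] - E[e^{-T}] = 2 E[sinh T] ∈ [0, 2]`.
The lower half gives `e^{-m} ≤ E[e^{-T}] ≤ E[e^T] ≤ e^{m + G/2}`, i.e. `m ≥ -G/4`.
The upper half gives `e^m - e^{-m + G/2} ≤ 2`, i.e. `sinh (m - G/4) ≤ e^{-G/4} ≤ 1`,
and `x ≤ sinh x` for `x ≥ 0` then forces `m - G/4 ≤ 1`.
-/

open MeasureTheory Real

section Integrals

variable {Ω : Type*} [MeasurableSpace Ω] {μ : Measure Ω} {f : Ω → ℝ}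

theorem exp_integral_le_integral_exp [IsProbabilityMeasure μ] (hf : Integrable f μ)
    (hexp : Integrable (fun ω => exp (f ω)) μ) :
    exp (∫ ω, f ω ∂μ) ≤ ∫ ω, exp (f ω) ∂μ :=
  convexOn_exp.map_integral_le continuous_exp.continuousOn isClosed_univ
    (Filter.Eventually.of_forall fun _ => Set.mem_univ _) hf hexp

theorem integral_sinh_eq (hexp : Integrable (fun ω => exp (f ω)) μ)
    (hexp' : Integrable (fun ω => exp (-f ω)) μ) :
    ∫ ω, sinh (f ω) ∂μ = ((∫ ω, exp (f ω) ∂μ) - ∫ ω, exp (-f ω) ∂μ) / 2 := by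
  simp only [sinh_eq]
  rw [integral_div, integral_sub hexp hexp']

end Integrals

theorem le_one_add_quarter_of_exp_sub_exp_le {m G : ℝ} (hG : 0 ≤ G)
    (h : exp m - exp (-m + G / 2) ≤ 2) : m ≤ 1 + G / 4 := by
  set x := m - G / 4 with hx_def
  have hsinh : sinh x * exp (G / 4) ≤ 1 := by
    have hsplit : exp m - exp (-m + G / 2) = 2 * (sinh x * exp (G / 4)) := by
      rw [sinh_eq, show m = x + G / 4 by ring, show -(x + G / 4) + G / 2 = -x + G / 4 by ring,
        exp_add, exp_add]
      ring
    linarith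
  have hexp : 1 ≤ exp (G / 4) := one_le_exp (by positivity)
  by_cases hx : 0 ≤ x
  · have hsinh_le_one : sinh x ≤ 1 := by nlinarith [sinh_nonneg_iff.mpr hx]
    linarith [self_le_sinh_iff.mpr hx]
  · linarith [not_le.mp hx]

theorem mean_bound_from_exponential_moments
    {Ω : Type*} [MeasureSpace Ω] [IsProbabilityMeasure (volume : Measure Ω)]
    (T : Ω → ℝ) (hT : Integrable T)
    (hexp : Integrable (fun ω => Real.exp (T ω)))
    (hexp' : Integrable (fun ω => Real.exp (- T ω)))
    (G : ℝ) (hG : 0 < G) (m : ℝ) (hm : m = ∫ ω, T ω)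
    (h1 : ∫ ω, Real.exp (T ω) ≤ Real.exp (m + G / 2))
    (h2 : ∫ ω, Real.exp (- T ω) ≤ Real.exp (- m + G / 2))
    (hs0 : 0 ≤ ∫ ω, Real.sinh (T ω))
    (hs1 : ∫ ω, Real.sinh (T ω) ≤ 1) :
    - G / 4 ≤ m ∧ m ≤ 1 + G / 4 := by
  have hsinh := integral_sinh_eq hexp hexp'
  have hjensen : exp m ≤ ∫ ω, exp (T ω) := hm ▸ exp_integral_le_integral_exp hT hexp
  have hjensen' : exp (-m) ≤ ∫ ω, exp (-T ω) := by
    simpa only [integral_neg, ← hm] using exp_integral_le_integral_exp (f := fun ω => -T ω) hT.neg hexp'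
  constructor
  · have hexp_le : exp (-m) ≤ exp (m + G / 2) := by linarith
    linarith [exp_le_exp.mp hexp_le]
  · exact le_one_add_quarter_of_exp_sub_exp_le hG.le (by linarith)
end

section
/- Let d ≥ 3 and 0 ≤ p < d−2. There exists a constant A_p < ∞, depending only on d and p, such that the following holds for every torus Λ = (ℤ/Lℤ)^d: if a assigns to each nearest-neighbor edge {x,y} of Λ a weight a_{xy} ≥ (1 + max(|x|,|y|))^{−p}, where |x| denotes the distance from x to the origin in the centered fundamental domain, then for every f : Λ → ℝ with ∑_{j∈Λ} f_j = 0 one has f_0² ≤ A_p ∑_{edges {x,y}} a_{xy} (f_x − f_y)². Equivalently, the Green's function of the weighted lattice operator L (with quadratic form (f, Lf) = ∑_{edges} a_{xy}(f_x−f_y)²), restricted to the orthogonal complement of constants, satisfies 0 ≤ L̃^{−1}(0,0) ≤ A_p uniformly in L. -/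
/-!
Average `f` over the dyadic boxes `{x : |x| ≤ 2 ^ s - 1}`. The smallest box is `{0}` and, `f`
having mean zero, the average over the largest one (the whole torus) vanishes, so `f 0` telescopes
into differences of consecutive averages. For boxes of radii `n ≤ m`, the squared difference of
the averages is at most the mean of `(f x - f y) ^ 2` over pairs of points of the boxes. Joining
`x` to `y` one coordinate at a time and applying Cauchy–Schwarz along coordinate lines bounds that
mean by `O(m ^ 2 / n ^ d)` times the unweighted energy of the box of radius `m`, and there the
weights are at least `(1 + m) ^ (-p)`. For `m = 2 n + 1` the squared differences are therefore
`O(n ^ (p + 2 - d))`; since `p < d - 2` their square roots are summable along dyadic `n`.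
-/

open scoped Classical

noncomputable section

namespace SZ

/-- Distance of `z ∈ ℤ/Lℤ` to `0` in the centered fundamental domain. -/
def znorm {L : ℕ} (z : ZMod L) : ℕ := min z.val (L - z.val)

/-- Distance `|x|` of a torus site to the origin (sup over the coordinates of
their centered representatives). -/
def tnorm {d L : ℕ} (x : Fin d → ZMod L) : ℕ :=
  Finset.univ.sup fun k : Fin d => znorm (x k)

open Finset Function
open scoped BigOperators

lemma sum_Ico_sub_succ (g : ℤ → ℝ) {a b : ℤ} (hab : a ≤ b) :
    ∑ t ∈ Ico a b, (g t - g (t + 1)) = g a - g b := by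
  induction b, hab using Int.leInduction with
  | base => simp
  | succ b hab ih =>
    rw [← insert_Ico_right_eq_Ico_add_one hab, sum_insert (by simp), ih]
    ring

lemma sq_sub_le_mul_sum_sq_sub_succ (g : ℤ → ℝ) {lo hi a b : ℤ} (ha : a ∈ Icc lo hi)
    (hb : b ∈ Icc lo hi) :
    (g a - g b) ^ 2 ≤ (hi - lo : ℤ) * ∑ t ∈ Ico lo hi, (g t - g (t + 1)) ^ 2 := by
  wlog hab : a ≤ b generalizing a b
  · rw [← neg_sub, neg_sq]
    exact this hb ha (le_of_not_ge hab)
  rw [mem_Icc] at ha hb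
  have hcard : (#(Ico a b) : ℝ) ≤ (hi - lo : ℤ) := by
    rw [Int.card_Ico]
    exact_mod_cast (by omega : ((b - a).toNat : ℤ) ≤ hi - lo)
  calc (g a - g b) ^ 2 = (∑ t ∈ Ico a b, (g t - g (t + 1))) ^ 2 := by
        rw [sum_Ico_sub_succ g hab]
    _ ≤ #(Ico a b) * ∑ t ∈ Ico a b, (g t - g (t + 1)) ^ 2 :=
        sq_sum_le_card_mul_sum_sq (f := fun t => g t - g (t + 1))
    _ ≤ (hi - lo : ℤ) * ∑ t ∈ Ico lo hi, (g t - g (t + 1)) ^ 2 :=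
      mul_le_mul hcard
        (sum_le_sum_of_subset_of_nonneg (Ico_subset_Ico ha.1 hb.2) fun _ _ _ => sq_nonneg _)
        (sum_nonneg fun _ _ => sq_nonneg _) ((Nat.cast_nonneg _).trans hcard)

lemma sq_sub_expect_le {ι : Type*} {s t : Finset ι} (hs : s.Nonempty) (ht : t.Nonempty)
    (f : ι → ℝ) :
    (𝔼 x ∈ s, f x - 𝔼 y ∈ t, f y) ^ 2 ≤ (∑ x ∈ s, ∑ y ∈ t, (f x - f y) ^ 2) / (#s * #t) := by
  have hs' : (0 : ℝ) < #s := by exact_mod_cast hs.card_pos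
  have ht' : (0 : ℝ) < #t := by exact_mod_cast ht.card_pos
  have h : 𝔼 x ∈ s, f x - 𝔼 y ∈ t, f y = (∑ q ∈ s ×ˢ t, (f q.1 - f q.2)) / #(s ×ˢ t) := by
    simp only [expect_eq_sum_div_card, sum_product, sum_sub_distrib, sum_const, nsmul_eq_mul,
      card_product, Nat.cast_mul, ← mul_sum]
    field_simp
  rw [h]
  refine sum_div_card_sq_le_sum_sq_div_card.trans_eq ?_
  rw [sum_product, card_product, Nat.cast_mul]

lemma sq_sum_le_of_sq_le_mul_pow {δ : ℕ → ℝ} {C ρ : ℝ} (hC : 0 ≤ C) (hρ₀ : 0 ≤ ρ) (hρ₁ : ρ < 1)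
    (h : ∀ s, δ s ^ 2 ≤ C * ρ ^ s) (N : ℕ) :
    (∑ s ∈ range N, δ s) ^ 2 ≤ C / (1 - √ρ) ^ 2 := by
  have hr : √ρ < 1 := (Real.sqrt_lt' one_pos).mpr (by simpa using hρ₁)
  have hδ : ∀ s, |δ s| ≤ √C * √ρ ^ s := fun s => by
    refine (Real.abs_le_sqrt ((h s).trans_eq ?_)).trans_eq (Real.sqrt_sq (by positivity))
    rw [mul_pow, Real.sq_sqrt hC, ← pow_mul, mul_comm s 2, pow_mul, Real.sq_sqrt hρ₀]
  have hsum : |∑ s ∈ range N, δ s| ≤ √C / (1 - √ρ) :=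
    calc |∑ s ∈ range N, δ s| ≤ ∑ s ∈ range N, √C * √ρ ^ s :=
          (abs_sum_le_sum_abs _ _).trans (sum_le_sum fun s _ => hδ s)
      _ ≤ √C * (√ρ ^ 0 / (1 - √ρ)) := by
          rw [← mul_sum, range_eq_Ico]
          exact mul_le_mul_of_nonneg_left (geom_sum_Ico_le_of_lt_one (by positivity) hr)
            (by positivity)
      _ = √C / (1 - √ρ) := by ring
  calc (∑ s ∈ range N, δ s) ^ 2 = |∑ s ∈ range N, δ s| ^ 2 := (sq_abs _).symm
    _ ≤ (√C / (1 - √ρ)) ^ 2 := pow_le_pow_left₀ (abs_nonneg _) hsum 2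
    _ = C / (1 - √ρ) ^ 2 := by rw [div_pow, Real.sq_sqrt hC]

section Splice

variable {α : Type*} {d : ℕ}

-- As `j` runs from `0` to `d`, `splice j x y` walks from `x` to `y` one coordinate at a time.
def splice (j : ℕ) (x y : Fin d → α) : Fin d → α := fun i => if (i : ℕ) < j then y i else x i

lemma splice_mem_piFinset {j : ℕ} {s : Fin d → Finset α} {x y : Fin d → α}
    (hx : x ∈ Fintype.piFinset s) (hy : y ∈ Fintype.piFinset s) :
    splice j x y ∈ Fintype.piFinset s := by
  rw [Fintype.mem_piFinset] at hx hy ⊢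
  intro i
  by_cases h : (i : ℕ) < j <;> simp [splice, h, hx i, hy i]

variable (x y : Fin d → α)

@[simp]
lemma splice_zero : splice 0 x y = x := rfl

lemma splice_of_le {j : ℕ} (h : d ≤ j) : splice j x y = y :=
  funext fun i => if_pos (i.2.trans_le h)

lemma splice_apply_self (k : Fin d) : splice k x y k = x k :=
  if_neg (lt_irrefl _)

lemma splice_succ [DecidableEq α] (k : Fin d) :
    splice (k + 1) x y = update (splice k x y) k (y k) := by
  funext i
  rcases eq_or_ne i k with rfl | hik
  · simp [splice]
  · simp only [splice, update_of_ne hik, Nat.lt_succ_iff_lt_or_eq, Fin.val_eq_val, hik, or_false]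

lemma splice_splice_splice (j : ℕ) : splice j (splice j x y) (splice j y x) = x := by
  funext i
  by_cases h : (i : ℕ) < j <;> simp [splice, h]

-- `(x, y) ↦ (splice j x y, splice j y x)` is an involution of `S ×ˢ S`.
lemma sum_sum_splice {β : Type*} [AddCommMonoid β] (s : Fin d → Finset α) (j : ℕ)
    (G : (Fin d → α) → β) :
    ∑ x ∈ Fintype.piFinset s, ∑ y ∈ Fintype.piFinset s, G (splice j x y)
      = #(Fintype.piFinset s) • ∑ z ∈ Fintype.piFinset s, G z := by
  set S := Fintype.piFinset s
  have hmaps : ∀ q ∈ S ×ˢ S, (splice j q.1 q.2, splice j q.2 q.1) ∈ S ×ˢ S := fun q hq =>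
    mem_product.mpr ⟨splice_mem_piFinset (mem_product.mp hq).1 (mem_product.mp hq).2,
      splice_mem_piFinset (mem_product.mp hq).2 (mem_product.mp hq).1⟩
  calc ∑ x ∈ S, ∑ y ∈ S, G (splice j x y) = ∑ q ∈ S ×ˢ S, G (splice j q.1 q.2) :=
        (sum_product' _ _ _).symm
    _ = ∑ q ∈ S ×ˢ S, G q.1 :=
        sum_nbij' (fun q => (splice j q.1 q.2, splice j q.2 q.1))
          (fun q => (splice j q.1 q.2, splice j q.2 q.1)) hmaps hmaps
          (fun q _ => by simp [splice_splice_splice]) (fun q _ => by simp [splice_splice_splice])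
          fun _ _ => rfl
    _ = #S • ∑ z ∈ S, G z := by rw [sum_product, smul_sum]; simp [sum_const]

end Splice

lemma sum_update_le_card_mul_sum {α : Type*} [DecidableEq α] {d : ℕ} (s : Fin d → Finset α)
    (T : (Fin d → α) → ℝ) (hT : ∀ v, 0 ≤ T v) (k : Fin d) {c : α} (hc : c ∈ s k) :
    ∑ z ∈ Fintype.piFinset s, T (update z k c)
      ≤ #(s k) * ∑ v ∈ Fintype.piFinset s with v k = c, T v := by
  set S := Fintype.piFinset s
  have hmaps : ∀ z ∈ S, update z k c ∈ {v ∈ S | v k = c} := by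
    intro z hz
    rw [Fintype.mem_piFinset] at hz
    rw [mem_filter, Fintype.mem_piFinset]
    refine ⟨fun i => ?_, update_self _ _ _⟩
    rcases eq_or_ne i k with rfl | hik
    · simpa using hc
    · simpa [hik] using hz i
  have hfiber : ∀ v, #{z ∈ S | update z k c = v} ≤ #(s k) := by
    intro v
    refine card_le_card_of_injOn (fun z => z k) (fun z hz => ?_) fun z₁ hz₁ z₂ hz₂ h => ?_
    · exact Fintype.mem_piFinset.mp (mem_filter.mp hz).1 k
    · have hrestore : ∀ z : Fin d → α, update (update z k c) k (z k) = z := fun z => by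
        rw [update_idem, update_eq_self]
      rw [← hrestore z₁, ← hrestore z₂, (mem_filter.mp hz₁).2, (mem_filter.mp hz₂).2]
      exact congrArg _ h
  calc ∑ z ∈ S, T (update z k c)
      = ∑ v ∈ S with v k = c, ∑ z ∈ S with update z k c = v, T (update z k c) :=
        (sum_fiberwise_of_maps_to hmaps _).symm
    _ = ∑ v ∈ S with v k = c, #{z ∈ S | update z k c = v} * T v := by
        refine sum_congr rfl fun v _ => ?_
        rw [sum_congr rfl fun z hz => by rw [(mem_filter.mp hz).2], sum_const, nsmul_eq_mul]
    _ ≤ ∑ v ∈ S with v k = c, #(s k) * T v := by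
        gcongr with v
        · exact hT v
        · exact_mod_cast hfiber v
    _ = #(s k) * ∑ v ∈ S with v k = c, T v := (mul_sum _ _ _).symm

lemma intCast_injOn_Ico {L : ℕ} {a b : ℤ} (h : b - a ≤ L) :
    Set.InjOn (Int.cast : ℤ → ZMod L) (Set.Ico a b) := by
  intro s hs t ht hst
  have hdvd : (L : ℤ) ∣ t - s := (ZMod.intCast_eq_intCast_iff_dvd_sub s t L).mp hst
  have := Int.eq_zero_of_abs_lt_dvd hdvd (by rw [abs_lt]; grind)
  omega

lemma tnorm_le_iff {d L m : ℕ} {x : Fin d → ZMod L} : tnorm x ≤ m ↔ ∀ k, znorm (x k) ≤ m := by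
  simp [tnorm]

section Window

variable {L : ℕ} [NeZero L]

lemma znorm_eq_natAbs_valMinAbs (z : ZMod L) : znorm z = z.valMinAbs.natAbs :=
  (ZMod.valMinAbs_natAbs_eq_min z).symm

lemma znorm_le_half (z : ZMod L) : znorm z ≤ L / 2 :=
  znorm_eq_natAbs_valMinAbs z ▸ ZMod.natAbs_valMinAbs_le z

lemma znorm_intCast_le (t : ℤ) : znorm (t : ZMod L) ≤ t.natAbs := by
  rw [znorm_eq_natAbs_valMinAbs]
  exact ZMod.natAbs_min_of_le_div_two L _ _ (ZMod.coe_valMinAbs _) (ZMod.natAbs_valMinAbs_le _)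

variable (L) in
def window (m : ℕ) : Finset (ZMod L) := {z | znorm z ≤ m}

@[simp]
lemma mem_window {m : ℕ} {z : ZMod L} : z ∈ window L m ↔ znorm z ≤ m := by
  simp [window]

lemma card_window_le (m : ℕ) : #(window L m) ≤ 2 * m + 1 := by
  have hsub : window L m ⊆ (Icc (-(m : ℤ)) m).image (Int.cast : ℤ → ZMod L) := by
    intro z hz
    rw [mem_window, znorm_eq_natAbs_valMinAbs] at hz
    exact mem_image.mpr ⟨z.valMinAbs, by rw [mem_Icc]; omega, ZMod.coe_valMinAbs z⟩
  calc #(window L m) ≤ #(Icc (-(m : ℤ)) m) := (card_le_card hsub).trans card_image_le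
    _ = 2 * m + 1 := by rw [Int.card_Icc]; omega

lemma min_le_card_window (m : ℕ) : min (2 * m + 1) L ≤ #(window L m) := by
  by_cases h : 2 * m + 1 ≤ L
  · have hsub : (Ico (-(m : ℤ)) (m + 1)).image (Int.cast : ℤ → ZMod L) ⊆ window L m := by
      intro z hz
      obtain ⟨t, ht, rfl⟩ := mem_image.mp hz
      rw [mem_Ico] at ht
      exact mem_window.mpr ((znorm_intCast_le t).trans (by omega))
    have hinj := intCast_injOn_Ico (L := L) (a := -(m : ℤ)) (b := m + 1) (by omega)
    calc min (2 * m + 1) L ≤ #(Ico (-(m : ℤ)) (m + 1)) := by rw [Int.card_Ico]; omega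
      _ = _ := (card_image_of_injOn (by simpa using hinj)).symm
      _ ≤ #(window L m) := card_le_card hsub
  · have huniv : window L m = univ := by
      ext z
      simpa using (znorm_le_half z).trans (by omega)
    rw [huniv, card_univ, ZMod.card]
    exact min_le_right _ _

end Window

section Box

variable {d L : ℕ} [NeZero L]

variable (d L) in
def box (m : ℕ) : Finset (Fin d → ZMod L) := Fintype.piFinset fun _ => window L m

@[simp]
lemma mem_box {m : ℕ} {x : Fin d → ZMod L} : x ∈ box d L m ↔ tnorm x ≤ m := by
  simp [box, tnorm_le_iff]

lemma card_box (m : ℕ) : #(box d L m) = #(window L m) ^ d := by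
  simp [box]

lemma box_mono {n m : ℕ} (h : n ≤ m) : box d L n ⊆ box d L m :=
  fun _ hx => mem_box.mpr ((mem_box.mp hx).trans h)

lemma zero_mem_box (m : ℕ) : (0 : Fin d → ZMod L) ∈ box d L m := by
  simp [tnorm_le_iff, znorm_eq_natAbs_valMinAbs]

lemma box_zero : box d L 0 = {0} := by
  ext x
  rw [mem_box, tnorm_le_iff, mem_singleton, funext_iff]
  simp [znorm_eq_natAbs_valMinAbs, ZMod.valMinAbs_eq_zero]

lemma box_eq_univ {m : ℕ} (h : L / 2 ≤ m) : box d L m = univ :=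
  eq_univ_of_forall fun _ => mem_box.mpr (tnorm_le_iff.mpr fun _ => (znorm_le_half _).trans h)

lemma update_mem_box {m : ℕ} {x : Fin d → ZMod L} (hx : x ∈ box d L m) (k : Fin d) {c : ZMod L}
    (hc : znorm c ≤ m) : update x k c ∈ box d L m :=
  Fintype.mem_piFinset.mpr fun i => by
    rcases eq_or_ne i k with rfl | hik
    · simpa using hc
    · simpa [hik] using Fintype.mem_piFinset.mp hx i

end Box

section Line

variable {d L : ℕ} [NeZero L]

def lineEnergy (M : ℕ) (f : (Fin d → ZMod L) → ℝ) (k : Fin d) (z : Fin d → ZMod L) : ℝ :=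
  ∑ t ∈ Ico (-(M : ℤ)) M, (f (update z k (t : ZMod L)) - f (update z k ((t : ZMod L) + 1))) ^ 2

lemma sq_sub_update_le_lineEnergy {M : ℕ} (f : (Fin d → ZMod L) → ℝ) {k : Fin d}
    {z : Fin d → ZMod L} {c : ZMod L} (hz : znorm (z k) ≤ M) (hc : znorm c ≤ M) :
    (f z - f (update z k c)) ^ 2 ≤ 2 * M * lineEnergy M f k z := by
  set g : ℤ → ℝ := fun t => f (update z k (t : ZMod L))
  have hg : ∀ w : ZMod L, g w.valMinAbs = f (update z k w) := by simp [g, ZMod.coe_valMinAbs]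
  rw [znorm_eq_natAbs_valMinAbs] at hz hc
  have key := sq_sub_le_mul_sum_sq_sub_succ g (lo := -M) (hi := M)
    (a := (z k).valMinAbs) (b := c.valMinAbs) (by rw [mem_Icc]; omega) (by rw [mem_Icc]; omega)
  rw [hg, hg, update_eq_self] at key
  convert key using 1
  simp only [lineEnergy, g]
  push_cast
  ring

lemma sq_sub_le_sum_lineEnergy {M : ℕ} (f : (Fin d → ZMod L) → ℝ) {x y : Fin d → ZMod L}
    (hx : tnorm x ≤ M) (hy : tnorm y ≤ M) :
    (f x - f y) ^ 2 ≤ d * (2 * M) * ∑ k : Fin d, lineEnergy M f k (splice k x y) := by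
  have htele : f x - f y = ∑ k : Fin d, (f (splice k x y) - f (splice (k + 1) x y)) := by
    rw [Fin.sum_univ_eq_sum_range (fun j => f (splice j x y) - f (splice (j + 1) x y)),
      sum_range_sub', splice_zero, splice_of_le x y le_rfl]
  calc (f x - f y) ^ 2 = (∑ k : Fin d, (f (splice k x y) - f (splice (k + 1) x y))) ^ 2 := by
        rw [htele]
    _ ≤ d * ∑ k : Fin d, (f (splice k x y) - f (splice (k + 1) x y)) ^ 2 := by
        simpa using sq_sum_le_card_mul_sum_sq (s := univ)
          (f := fun k : Fin d => f (splice k x y) - f (splice (k + 1) x y))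
    _ ≤ d * ∑ k : Fin d, 2 * M * lineEnergy M f k (splice k x y) := by
        gcongr with k
        rw [splice_succ]
        exact sq_sub_update_le_lineEnergy f
          ((splice_apply_self x y k).symm ▸ tnorm_le_iff.mp hx k) (tnorm_le_iff.mp hy k)
    _ = d * (2 * M) * ∑ k : Fin d, lineEnergy M f k (splice k x y) := by
        rw [← mul_sum, ← mul_assoc]

lemma sum_lineEnergy_le {M m : ℕ} (hM : 2 * M ≤ L) (hMm : M ≤ m) (f : (Fin d → ZMod L) → ℝ)
    (k : Fin d) :
    ∑ z ∈ box d L m, lineEnergy M f k z ≤ #(window L m) *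
      ∑ v ∈ box d L m with update v k (v k + 1) ∈ box d L m,
        (f v - f (update v k (v k + 1))) ^ 2 := by
  set T : (Fin d → ZMod L) → ℝ := fun v => (f v - f (update v k (v k + 1))) ^ 2
  set I := Ico (-(M : ℤ)) M
  have hT : ∀ z (c : ZMod L), (f (update z k c) - f (update z k (c + 1))) ^ 2 = T (update z k c) :=
    fun z c => by simp [T]
  have hinj : Set.InjOn (Int.cast : ℤ → ZMod L) I := by
    rw [coe_Ico]
    exact intCast_injOn_Ico (by omega)
  have hedge : ∀ v ∈ box d L m, v k ∈ I.image (Int.cast : ℤ → ZMod L) →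
      update v k (v k + 1) ∈ box d L m := by
    intro v hv hvk
    obtain ⟨t, ht, htv⟩ := mem_image.mp hvk
    rw [mem_Ico] at ht
    refine update_mem_box hv k (le_trans ?_ ((znorm_intCast_le (L := L) (t + 1)).trans (by omega)))
    rw [← htv, Int.cast_add, Int.cast_one]
  calc ∑ z ∈ box d L m, lineEnergy M f k z
      = ∑ t ∈ I, ∑ z ∈ box d L m, T (update z k t) := by
        simp only [lineEnergy, hT]; exact sum_comm
    _ ≤ ∑ t ∈ I, #(window L m) * ∑ v ∈ box d L m with v k = (t : ZMod L), T v :=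
        sum_le_sum fun t ht => sum_update_le_card_mul_sum (fun _ => window L m) T
          (fun _ => sq_nonneg _) k
          (mem_window.mpr ((znorm_intCast_le t).trans (by rw [mem_Ico] at ht; omega)))
    _ = #(window L m) * ∑ v ∈ box d L m with v k ∈ I.image (Int.cast : ℤ → ZMod L), T v := by
        rw [← mul_sum, ← sum_fiberwise_eq_sum_filter, sum_image hinj]
    _ ≤ #(window L m) * ∑ v ∈ box d L m with update v k (v k + 1) ∈ box d L m, T v := by
        gcongr with v hv
        exact hedge v hv

end Line

section Weights

variable {d L : ℕ}

lemma adj_update_add_one (hL : 2 ≤ L) (v : Fin d → ZMod L) (k : Fin d) :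
    Adj v (update v k (v k + 1)) := by
  have : Fact (1 < L) := ⟨hL⟩
  exact ⟨fun h => one_ne_zero (add_eq_left.mp (update_eq_self_iff.mp h.symm)), k, .inl rfl⟩

lemma update_add_one_injective (hL : 2 ≤ L) (v : Fin d → ZMod L) :
    Injective fun k => update v k (v k + 1) := by
  have : Fact (1 < L) := ⟨hL⟩
  intro k₁ k₂ h
  by_contra hne
  have := congrFun h k₁
  simp only [update_self, update_of_ne hne] at this
  exact one_ne_zero (add_eq_left.mp this)

def HasWeightLowerBound (p : ℝ) (a : (Fin d → ZMod L) → (Fin d → ZMod L) → ℝ) : Prop :=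
  ∀ x y, Adj x y → ((1 : ℝ) + (max (tnorm x) (tnorm y) : ℕ)) ^ (-p) ≤ a x y

def dirichletForm [NeZero L] (a : (Fin d → ZMod L) → (Fin d → ZMod L) → ℝ)
    (f : (Fin d → ZMod L) → ℝ) : ℝ :=
  nnSum fun x y => a x y * (f x - f y) ^ 2

variable {p : ℝ} {a : (Fin d → ZMod L) → (Fin d → ZMod L) → ℝ}

lemma HasWeightLowerBound.nonneg (ha : HasWeightLowerBound p a) {v w : Fin d → ZMod L}
    (hvw : Adj v w) : 0 ≤ a v w :=
  (Real.rpow_nonneg (by positivity) _).trans (ha v w hvw)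

lemma HasWeightLowerBound.one_le_rpow_mul (hp : 0 ≤ p) (ha : HasWeightLowerBound p a) {m : ℕ}
    {v w : Fin d → ZMod L} (hvw : Adj v w) (hv : tnorm v ≤ m) (hw : tnorm w ≤ m) :
    1 ≤ ((1 : ℝ) + m) ^ p * a v w := by
  have hm : (0 : ℝ) < 1 + m := by positivity
  rw [← inv_le_iff_one_le_mul₀' (Real.rpow_pos_of_pos hm p), ← Real.rpow_neg hm.le]
  refine le_trans ?_ (ha v w hvw)
  exact Real.rpow_le_rpow_of_nonpos (by positivity) (by gcongr; exact_mod_cast max_le hv hw)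
    (neg_nonpos.mpr hp)

variable [NeZero L]

lemma sum_sum_update_add_one_le (hL : 2 ≤ L) (g : (Fin d → ZMod L) → (Fin d → ZMod L) → ℝ)
    (hg : ∀ v w, 0 ≤ g v w) :
    ∑ k : Fin d, ∑ v, g v (update v k (v k + 1)) ≤ ∑ v, ∑ w, if Adj v w then g v w else 0 := by
  rw [sum_comm]
  refine sum_le_sum fun v _ => ?_
  calc ∑ k : Fin d, g v (update v k (v k + 1))
      = ∑ w ∈ univ.image fun k : Fin d => update v k (v k + 1), if Adj v w then g v w else 0 := by
        rw [sum_image fun k₁ _ k₂ _ h => update_add_one_injective hL v h]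
        exact sum_congr rfl fun k _ => (if_pos (adj_update_add_one hL v k)).symm
    _ ≤ ∑ w, if Adj v w then g v w else 0 :=
        sum_le_sum_of_subset_of_nonneg (subset_univ _) fun w _ _ => by
          split_ifs
          exacts [hg v w, le_rfl]

lemma dirichletForm_nonneg (ha : HasWeightLowerBound p a) (f : (Fin d → ZMod L) → ℝ) :
    0 ≤ dirichletForm a f := by
  refine mul_nonneg (by norm_num) (sum_nonneg fun v _ => sum_nonneg fun w _ => ?_)
  split_ifs with hvw
  exacts [mul_nonneg (ha.nonneg hvw) (sq_nonneg _), le_rfl]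

lemma sum_box_edges_le (hL : 2 ≤ L) (hp : 0 ≤ p) (ha : HasWeightLowerBound p a)
    (f : (Fin d → ZMod L) → ℝ) (m : ℕ) :
    ∑ k : Fin d, ∑ v ∈ box d L m with update v k (v k + 1) ∈ box d L m,
        (f v - f (update v k (v k + 1))) ^ 2
      ≤ ((1 : ℝ) + m) ^ p * (2 * dirichletForm a f) := by
  set g : (Fin d → ZMod L) → (Fin d → ZMod L) → ℝ := fun v w =>
    if v ∈ box d L m ∧ w ∈ box d L m then (f v - f w) ^ 2 else 0
  have hg : ∀ v w, 0 ≤ g v w := fun v w => by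
    simp only [g]; split_ifs; exacts [sq_nonneg _, le_rfl]
  calc ∑ k : Fin d, ∑ v ∈ box d L m with update v k (v k + 1) ∈ box d L m,
        (f v - f (update v k (v k + 1))) ^ 2
      = ∑ k : Fin d, ∑ v, g v (update v k (v k + 1)) := by
        simp only [g, ite_and, ← sum_filter, filter_mem_eq_inter, univ_inter]
    _ ≤ ∑ v, ∑ w, if Adj v w then g v w else 0 := sum_sum_update_add_one_le hL g hg
    _ ≤ ∑ v, ∑ w, ((1 : ℝ) + m) ^ p * if Adj v w then a v w * (f v - f w) ^ 2 else 0 := by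
        gcongr with v _ w _
        simp only [g]
        split_ifs with hvw hbox
        · rw [mem_box, mem_box] at hbox
          nlinarith [ha.one_le_rpow_mul hp hvw hbox.1 hbox.2, sq_nonneg (f v - f w)]
        · exact mul_nonneg (by positivity) (mul_nonneg (ha.nonneg hvw) (sq_nonneg _))
        · simp
    _ = ((1 : ℝ) + m) ^ p * (2 * dirichletForm a f) := by
        simp only [dirichletForm, nnSum, ← mul_sum]
        ring

end Weights

section Scales

variable {d L : ℕ} [NeZero L] {p : ℝ} {a : (Fin d → ZMod L) → (Fin d → ZMod L) → ℝ}

lemma sum_sum_sq_sub_le (hL : 2 ≤ L) (hp : 0 ≤ p) (ha : HasWeightLowerBound p a)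
    (f : (Fin d → ZMod L) → ℝ) (m : ℕ) :
    ∑ x ∈ box d L m, ∑ y ∈ box d L m, (f x - f y) ^ 2
      ≤ 4 * d * m * #(box d L m) * #(window L m) * ((1 : ℝ) + m) ^ p * dirichletForm a f := by
  set M := min m (L / 2)
  set B := box d L m
  have hB : ∀ x ∈ B, tnorm x ≤ M := fun x hx =>
    le_min (mem_box.mp hx) (tnorm_le_iff.mpr fun _ => znorm_le_half _)
  have hM : (M : ℝ) ≤ m := by exact_mod_cast min_le_left _ _
  calc ∑ x ∈ B, ∑ y ∈ B, (f x - f y) ^ 2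
      ≤ ∑ x ∈ B, ∑ y ∈ B, d * (2 * M) * ∑ k : Fin d, lineEnergy M f k (splice k x y) :=
        sum_le_sum fun x hx => sum_le_sum fun y hy =>
          sq_sub_le_sum_lineEnergy f (hB x hx) (hB y hy)
    _ = d * (2 * M) * ∑ k : Fin d, ∑ x ∈ B, ∑ y ∈ B, lineEnergy M f k (splice k x y) := by
        simp only [← mul_sum]
        rw [sum_congr rfl fun x _ => sum_comm, sum_comm]
    _ = d * (2 * M) * ∑ k : Fin d, #B * ∑ z ∈ B, lineEnergy M f k z := by
        simp only [B, box, sum_sum_splice, nsmul_eq_mul]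
    _ ≤ d * (2 * m) * ∑ k : Fin d, #B * (#(window L m) *
          ∑ v ∈ B with update v k (v k + 1) ∈ B, (f v - f (update v k (v k + 1))) ^ 2) := by
        gcongr with k
        · exact sum_nonneg fun _ _ => mul_nonneg (by positivity)
            (sum_nonneg fun _ _ => sum_nonneg fun _ _ => sq_nonneg _)
        · exact sum_lineEnergy_le (by omega) (min_le_left _ _) f k
    _ = d * (2 * m) * #B * #(window L m) * ∑ k : Fin d,
          ∑ v ∈ B with update v k (v k + 1) ∈ B, (f v - f (update v k (v k + 1))) ^ 2 := by
        simp only [← mul_sum]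
        ring
    _ ≤ d * (2 * m) * #B * #(window L m) * (((1 : ℝ) + m) ^ p * (2 * dirichletForm a f)) := by
        gcongr
        exact sum_box_edges_le hL hp ha f m
    _ = _ := by ring

lemma sq_sub_expect_box_le (hL : 2 ≤ L) (hp : 0 ≤ p) (ha : HasWeightLowerBound p a)
    (f : (Fin d → ZMod L) → ℝ) {n m : ℕ} (hnm : n ≤ m) :
    (𝔼 x ∈ box d L n, f x - 𝔼 x ∈ box d L m, f x) ^ 2
      ≤ 4 * d * m * #(window L m) * ((1 : ℝ) + m) ^ p / #(window L n) ^ d * dirichletForm a f := by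
  have hne : ∀ k, (box d L k).Nonempty := fun k => ⟨0, zero_mem_box k⟩
  have hBn : (0 : ℝ) < #(box d L n) := by exact_mod_cast (hne n).card_pos
  have hBm : (0 : ℝ) < #(box d L m) := by exact_mod_cast (hne m).card_pos
  calc (𝔼 x ∈ box d L n, f x - 𝔼 x ∈ box d L m, f x) ^ 2
      ≤ (∑ x ∈ box d L n, ∑ y ∈ box d L m, (f x - f y) ^ 2) / (#(box d L n) * #(box d L m)) :=
        sq_sub_expect_le (hne n) (hne m) f
    _ ≤ (∑ x ∈ box d L m, ∑ y ∈ box d L m, (f x - f y) ^ 2) / (#(box d L n) * #(box d L m)) := by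
        gcongr
        exact box_mono hnm
    _ ≤ 4 * d * m * #(box d L m) * #(window L m) * ((1 : ℝ) + m) ^ p * dirichletForm a f
          / (#(box d L n) * #(box d L m)) := by
        gcongr
        exact sum_sum_sq_sub_le hL hp ha f m
    _ = _ := by
        rw [card_box n, Nat.cast_pow]
        field_simp

lemma sq_sub_expect_box_two_mul_add_one_le (hL : 2 ≤ L) (hp : 0 ≤ p)
    (ha : HasWeightLowerBound p a) (f : (Fin d → ZMod L) → ℝ) (n : ℕ) :
    (𝔼 x ∈ box d L n, f x - 𝔼 x ∈ box d L (2 * n + 1), f x) ^ 2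
      ≤ d * 2 ^ (p + 5) * ((1 : ℝ) + n) ^ (p + 2 - d) * dirichletForm a f := by
  have hD := dirichletForm_nonneg ha f
  by_cases hn : n + 1 ≤ L
  swap
  · rw [box_eq_univ (by omega), box_eq_univ (by omega), sub_self, sq, mul_zero]
    positivity
  refine (sq_sub_expect_box_le hL hp ha f (by omega)).trans (mul_le_mul_of_nonneg_right ?_ hD)
  set R : ℝ := 1 + n
  have hR : 0 < R := by positivity
  have hm : (((2 * n + 1 : ℕ) : ℝ)) ≤ 2 * R := by push_cast [R]; linarith
  have hm₁ : (1 : ℝ) + (2 * n + 1 : ℕ) = 2 * R := by push_cast [R]; ring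
  have hWm : (#(window L (2 * n + 1)) : ℝ) ≤ 4 * R := by
    have : #(window L (2 * n + 1)) ≤ 4 * (1 + n) := (card_window_le _).trans (by omega)
    simp only [R]
    exact_mod_cast this
  have hWn : R ≤ #(window L n) := by
    have := min_le_card_window (L := L) n
    simp only [R]
    exact_mod_cast (by omega : 1 + n ≤ #(window L n))
  calc 4 * d * ((2 * n + 1 : ℕ) : ℝ) * #(window L (2 * n + 1)) * ((1 : ℝ) + (2 * n + 1 : ℕ)) ^ p
        / #(window L n) ^ d
      ≤ 4 * d * (2 * R) * (4 * R) * (2 * R) ^ p / R ^ d := by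
        rw [hm₁]
        gcongr
    _ = d * 2 ^ (p + 5) * R ^ (p + 2 - d) := by
        rw [Real.mul_rpow zero_le_two hR.le, Real.rpow_add two_pos, Real.rpow_sub hR,
          Real.rpow_add hR]
        norm_num
        field_simp
        ring

lemma sq_sub_expect_dyadic_box_le (hL : 2 ≤ L) (hp : 0 ≤ p) (ha : HasWeightLowerBound p a)
    (f : (Fin d → ZMod L) → ℝ) (s : ℕ) :
    (𝔼 x ∈ box d L (2 ^ s - 1), f x - 𝔼 x ∈ box d L (2 ^ (s + 1) - 1), f x) ^ 2
      ≤ d * 2 ^ (p + 5) * dirichletForm a f * ((2 : ℝ) ^ (p + 2 - d)) ^ s := by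
  have hs : 2 * (2 ^ s - 1) + 1 = 2 ^ (s + 1) - 1 := by
    have := Nat.one_le_two_pow (n := s)
    rw [pow_succ]
    omega
  have hR : (1 : ℝ) + ((2 ^ s - 1 : ℕ) : ℝ) = 2 ^ s := by
    rw [Nat.cast_sub Nat.one_le_two_pow]
    push_cast
    ring
  have h := sq_sub_expect_box_two_mul_add_one_le hL hp ha f (2 ^ s - 1)
  rw [hs, hR, ← Real.rpow_pow_comm zero_le_two] at h
  exact h.trans_eq (by ring)

end Scales

theorem weighted_green_bound_general (d : ℕ) (p : ℝ) (hp0 : 0 ≤ p)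
    (hp : p < (d : ℝ) - 2) :
    ∃ A : ℝ, ∀ (L : ℕ) [NeZero L], 2 ≤ L →
      ∀ a : (Fin d → ZMod L) → (Fin d → ZMod L) → ℝ,
      (∀ x y, a x y = a y x) →
      (∀ x y, Adj x y →
        ((1 : ℝ) + (max (tnorm x) (tnorm y) : ℕ)) ^ (-p) ≤ a x y) →
      ∀ f : (Fin d → ZMod L) → ℝ, (∑ j : Fin d → ZMod L, f j) = 0 →
      (f 0) ^ 2 ≤ A * nnSum (fun x y => a x y * (f x - f y) ^ 2) := by
  set ρ : ℝ := 2 ^ (p + 2 - d)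
  have hρ : ρ < 1 := Real.rpow_lt_one_of_one_lt_of_neg one_lt_two (by linarith)
  refine ⟨d * 2 ^ (p + 5) / (1 - √ρ) ^ 2, fun L _ hL a _ ha f hf => ?_⟩
  set F : ℕ → ℝ := fun s => 𝔼 x ∈ box d L (2 ^ s - 1), f x
  have hF₀ : F 0 = f 0 := by simp [F, box_zero]
  have hF_L : F L = 0 := by
    have : L / 2 ≤ 2 ^ L - 1 := by have := Nat.lt_two_pow_self (n := L); omega
    simp only [F, box_eq_univ this, expect_eq_sum_div_card, hf, zero_div]
  have hsplit : f 0 = ∑ s ∈ range L, (F s - F (s + 1)) := by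
    rw [sum_range_sub', hF₀, hF_L, sub_zero]
  rw [hsplit, div_mul_eq_mul_div]
  exact sq_sum_le_of_sq_le_mul_pow (mul_nonneg (by positivity) (dirichletForm_nonneg ha f))
    (by positivity) hρ (sq_sub_expect_dyadic_box_le hL hp0 ha f) L

/-- Uniform bound on the Green's function at the origin of non-uniformly
elliptic weighted Laplacians on the torus, stated as a weighted Poincaré
inequality for mean-zero functions. -/
theorem weighted_green_bound (d : ℕ) (hd : 3 ≤ d) (p : ℝ) (hp0 : 0 ≤ p)
    (hp : p < (d : ℝ) - 2) :
    ∃ A : ℝ, ∀ (L : ℕ) [NeZero L], 2 ≤ L →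
      ∀ a : (Fin d → ZMod L) → (Fin d → ZMod L) → ℝ,
      (∀ x y, a x y = a y x) →
      (∀ x y, Adj x y →
        ((1 : ℝ) + (max (tnorm x) (tnorm y) : ℕ)) ^ (-p) ≤ a x y) →
      ∀ f : (Fin d → ZMod L) → ℝ, (∑ j : Fin d → ZMod L, f j) = 0 →
      (f 0) ^ 2 ≤ A * nnSum (fun x y => a x y * (f x - f y) ^ 2) :=
  weighted_green_bound_general d p hp0 hp

end SZ
end
end

section
/- Let D be a real symmetric n×n matrix, ψ₀ ∈ ℝⁿ a unit vector with Dψ₀ = 0, W a real symmetric positive definite n×n matrix, and h > 0. Let P₀ = ψ₀ψ₀ᵀ, P = I − P₀, P_t = P W P − (P W P₀ W P)/(ψ₀, Wψ₀), let D̃ be the restriction of P D P to the hyperplane ψ₀^⊥, and let P̃_t be the restriction of P_t to ψ₀^⊥. Then det(D + hW) = det(D̃ + h P̃_t) · h (ψ₀, Wψ₀), where the first determinant is over ℝⁿ and the second over the (n−1)-dimensional space ψ₀^⊥. -/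
/-!
Write `Q = ψψᵀ`, `P = 1 - Q` and `c = (ψ, Aψ)`. If `c ≠ 0`, block Gaussian elimination of the
`ψ`-block gives `A = (1 + c⁻¹ PAQ) (S + cQ) (1 + c⁻¹ QAP)` with `S = PAP - c⁻¹ PAQAP` the Schur
complement; the outer factors are unipotent and `S + cQ = (S + Q)(1 + (c - 1)Q)`, so
`det A = det (S + Q) · c`. For `A = D + hW` the kernel condition `Dψ = 0 = ψᵀD` gives
`c = h (ψ, Wψ)` and turns the Schur complement into `PDP + hP_t`.
-/

open Matrix

theorem IsIdempotentElem.schur_factorization {K R : Type*} [Field K] [Ring R] [Algebra K R]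
    {Q A : R} {c : K} (hQ : IsIdempotentElem Q) (hQAQ : Q * A * Q = c • Q) (hc : c ≠ 0) :
    (1 + c⁻¹ • ((1 - Q) * A * Q)) *
        ((1 - Q) * A * (1 - Q) - c⁻¹ • ((1 - Q) * A * Q * A * (1 - Q)) + c • Q) *
        (1 + c⁻¹ • (Q * A * (1 - Q))) = A := by
  have hQQ : ∀ X : R, Q * (Q * X) = Q * X := fun X => by rw [← mul_assoc, hQ.eq]
  have hQAQ' : ∀ X : R, Q * (A * (Q * X)) = c • (Q * X) := fun X => by
    rw [← mul_assoc, ← mul_assoc, hQAQ, smul_mul_assoc]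
  simp only [mul_add, add_mul, mul_sub, sub_mul, mul_one, one_mul, smul_mul_assoc,
    mul_smul_comm, smul_sub, smul_add, smul_smul, mul_assoc, hQ.eq, hQQ, hQAQ, hQAQ']
  match_scalars <;> field_simp <;> ring

namespace Matrix

variable {ι R K : Type*} [Fintype ι] [CommRing R] [Field K]

theorem vecMulVec_mul_mul_vecMulVec {κ : Type*} (u v w : ι → R) (x : κ → R)
    (A : Matrix ι ι R) :
    vecMulVec u v * A * vecMulVec w x = (v ⬝ᵥ A *ᵥ w) • vecMulVec u x := by
  rw [vecMulVec_mul, vecMulVec_mul_vecMulVec, vecMulVec_smul, dotProduct_mulVec]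

theorem isIdempotentElem_vecMulVec_self {ψ : ι → R} (hψ : ψ ⬝ᵥ ψ = 1) :
    IsIdempotentElem (vecMulVec ψ ψ) := by
  rw [IsIdempotentElem, vecMulVec_mul_vecMulVec, hψ, one_smul]

variable [DecidableEq ι]

theorem det_one_add_vecMulVec (u v : ι → R) : (1 + vecMulVec u v).det = 1 + v ⬝ᵥ u := by
  rw [vecMulVec_eq Unit, det_one_add_replicateCol_mul_replicateRow]

theorem det_one_add_mul_mul_of_mul_eq_zero {A B : Matrix ι ι R} (hBA : B * A = 0)
    (X : Matrix ι ι R) : (1 + A * X * B).det = 1 := by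
  rw [Matrix.mul_assoc, det_one_add_mul_comm, Matrix.mul_assoc, hBA, Matrix.mul_zero,
    add_zero, det_one]

theorem det_eq_det_schur_add_vecMulVec_mul {ψ : ι → K} (hψ : ψ ⬝ᵥ ψ = 1)
    (A : Matrix ι ι K) (hc : ψ ⬝ᵥ A *ᵥ ψ ≠ 0) :
    A.det = ((1 - vecMulVec ψ ψ) * A * (1 - vecMulVec ψ ψ)
        - (ψ ⬝ᵥ A *ᵥ ψ)⁻¹ • ((1 - vecMulVec ψ ψ) * A * vecMulVec ψ ψ * A * (1 - vecMulVec ψ ψ))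
        + vecMulVec ψ ψ).det * (ψ ⬝ᵥ A *ᵥ ψ) := by
  set Q := vecMulVec ψ ψ
  set c := ψ ⬝ᵥ A *ᵥ ψ
  set S := (1 - Q) * A * (1 - Q) - c⁻¹ • ((1 - Q) * A * Q * A * (1 - Q))
  have hQ : IsIdempotentElem Q := isIdempotentElem_vecMulVec_self hψ
  have hPQ : (1 - Q) * Q = 0 := hQ.one_sub_mul_self
  have hSQ : S * Q = 0 := by
    simp only [S, sub_mul, smul_mul_assoc, Matrix.mul_assoc, hPQ, Matrix.mul_zero, smul_zero,
      sub_zero]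
  have hcenter : S + c • Q = (S + Q) * (1 + (c - 1) • Q) := by
    rw [mul_add, mul_one, mul_smul_comm, add_mul, hSQ, hQ.eq, zero_add]
    module
  have hL : (1 + c⁻¹ • ((1 - Q) * A * Q)).det = 1 := by
    rw [← smul_mul_assoc, ← mul_smul_comm]
    exact det_one_add_mul_mul_of_mul_eq_zero hQ.mul_one_sub_self _
  have hR : (1 + c⁻¹ • (Q * A * (1 - Q))).det = 1 := by
    rw [← smul_mul_assoc, ← mul_smul_comm]
    exact det_one_add_mul_mul_of_mul_eq_zero hPQ _
  have hscale : (1 + (c - 1) • Q).det = c := by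
    rw [← smul_vecMulVec, det_one_add_vecMulVec, dotProduct_smul, hψ, smul_eq_mul, mul_one,
      add_sub_cancel]
  conv_lhs => rw [← hQ.schur_factorization (vecMulVec_mul_mul_vecMulVec ψ ψ ψ ψ A) hc]
  rw [det_mul, det_mul, hL, hR, hcenter, det_mul, hscale, one_mul, mul_one]

end Matrix

theorem det_regularization_identity_general (n : ℕ)
    (D : Matrix (Fin n) (Fin n) ℝ) (hD : D.IsSymm)
    (ψ : Fin n → ℝ) (hψ : ∑ i, ψ i ^ 2 = 1) (hDψ : D.mulVec ψ = 0)
    (W : Matrix (Fin n) (Fin n) ℝ) (hW : W.PosDef)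
    (h : ℝ) (hh : 0 < h) :
    (D + h • W).det =
      ((1 - vecMulVec ψ ψ) * D * (1 - vecMulVec ψ ψ)
        + h • ((1 - vecMulVec ψ ψ) * W * (1 - vecMulVec ψ ψ)
            - (ψ ⬝ᵥ W.mulVec ψ)⁻¹ •
              ((1 - vecMulVec ψ ψ) * W * vecMulVec ψ ψ * W * (1 - vecMulVec ψ ψ)))
        + vecMulVec ψ ψ).det
      * (h * (ψ ⬝ᵥ W.mulVec ψ)) := by
  have hψψ : ψ ⬝ᵥ ψ = 1 := by simpa [dotProduct, sq] using hψ
  have ha : 0 < ψ ⬝ᵥ W *ᵥ ψ := by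
    simpa using hW.dotProduct_mulVec_pos (x := ψ) (by rintro rfl; simp at hψψ)
  have hc : ψ ⬝ᵥ (D + h • W) *ᵥ ψ = h * (ψ ⬝ᵥ W *ᵥ ψ) := by
    rw [add_mulVec, hDψ, zero_add, smul_mulVec, dotProduct_smul, smul_eq_mul]
  rw [det_eq_det_schur_add_vecMulVec_mul hψψ (D + h • W) (by rw [hc]; positivity), hc]
  set Q := vecMulVec ψ ψ
  have hDQ : ∀ X, D * (Q * X) = 0 := fun X => by
    rw [← Matrix.mul_assoc, mul_vecMulVec, hDψ, zero_vecMulVec, Matrix.zero_mul]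
  have hQD : ∀ X, Q * (D * X) = 0 := fun X => by
    rw [← Matrix.mul_assoc, vecMulVec_mul, ← mulVec_transpose, hD.eq, hDψ, vecMulVec_zero,
      Matrix.zero_mul]
  congr 3
  simp only [mul_add, add_mul, smul_mul_assoc, mul_smul_comm, Matrix.mul_assoc, hDQ, hQD,
    Matrix.mul_zero, smul_zero, zero_add]
  match_scalars <;> field_simp

theorem det_regularization_identity (n : ℕ) (hn : 1 ≤ n)
    (D : Matrix (Fin n) (Fin n) ℝ) (hD : D.IsSymm)
    (ψ : Fin n → ℝ) (hψ : ∑ i, ψ i ^ 2 = 1) (hDψ : D.mulVec ψ = 0)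
    (W : Matrix (Fin n) (Fin n) ℝ) (hW : W.PosDef)
    (h : ℝ) (hh : 0 < h) :
    (D + h • W).det =
      ((1 - vecMulVec ψ ψ) * D * (1 - vecMulVec ψ ψ)
        + h • ((1 - vecMulVec ψ ψ) * W * (1 - vecMulVec ψ ψ)
            - (ψ ⬝ᵥ W.mulVec ψ)⁻¹ •
              ((1 - vecMulVec ψ ψ) * W * vecMulVec ψ ψ * W * (1 - vecMulVec ψ ψ)))
        + vecMulVec ψ ψ).det
      * (h * (ψ ⬝ᵥ W.mulVec ψ)) :=
  det_regularization_identity_general n D hD ψ hψ hDψ W hW h hh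
end
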